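/- Let k be a field, L a finite-dimensional k-vector space, M = L × L^* with quadratic form Q(l, φ) = φ(l), and let Λ L carry the Cl(M, Q)-module structure in which L acts by exterior multiplication and L^* by contraction. Then: (1) the vector 1 ∈ Λ L is annihilated by every element of L^*; (2) the map Cl(M,Q) → Λ L, a ↦ a·1 is surjective; (3) Λ L is a simple Cl(M, Q)-module. -/

import Mathlib

/-- Left exterior multiplication by `l` on the exterior algebra. -/
noncomputable def extMul {k L : Type*} [Field k] [AddCommGroup L] [Module k L] (l : L) :
    ExteriorAlgebra k L →ₗ[k] ExteriorAlgebra k L :=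
  LinearMap.mulLeft k (ExteriorAlgebra.ι k l)

/-- Contraction (interior product) by a functional `φ` on the exterior algebra,
the odd derivation extending `φ`. -/
noncomputable def extContract {k L : Type*} [Field k] [AddCommGroup L] [Module k L]
    (φ : Module.Dual k L) : ExteriorAlgebra k L →ₗ[k] ExteriorAlgebra k L :=
  CliffordAlgebra.contractLeft (Q := (0 : QuadraticForm k L)) φ

/-! `Λ L` is generated by `1` under exterior multiplication, so an invariant subspace containing `1`
is everything; this gives surjectivity, and simplicity reduces to showing that a nonzero invariant
subspace contains `1`. Expand a nonzero vector in the basis `e_S = e_{s₁} ∧ ⋯ ∧ e_{sᵣ}` and pick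
a support set `S` of minimal size: multiplying by `e_{Sᶜ}` kills every other `e_T` (as `T` meets
`Sᶜ`) and leaves a nonzero multiple of the top form `e_1 ∧ ⋯ ∧ e_n`, which the successive
contractions by the dual basis `e_1^*, …, e_n^*` bring down to `1`. -/

namespace ExteriorAlgebra

open CliffordAlgebra

section CommRing

variable {R M : Type*} [CommRing R] [AddCommGroup M] [Module R M]

theorem mul_mem_of_forall_ι_mul_mem (p : Submodule R (ExteriorAlgebra R M))
    (hι : ∀ (v : M) (x : ExteriorAlgebra R M), x ∈ p → ι R v * x ∈ p)
    (y : ExteriorAlgebra R M) {x : ExteriorAlgebra R M} (hx : x ∈ p) : y * x ∈ p := by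
  induction y using CliffordAlgebra.induction generalizing x with
  | algebraMap r => simpa only [Algebra.algebraMap_eq_smul_one, smul_one_mul] using p.smul_mem r hx
  | ι v => exact hι v x hx
  | mul y z hy hz => simpa only [mul_assoc] using hy (hz hx)
  | add y z hy hz => simpa only [add_mul] using p.add_mem (hy hx) (hz hx)

theorem eq_top_of_one_mem (p : Submodule R (ExteriorAlgebra R M))
    (hι : ∀ (v : M) (x : ExteriorAlgebra R M), x ∈ p → ι R v * x ∈ p)
    (h1 : (1 : ExteriorAlgebra R M) ∈ p) : p = ⊤ :=
  eq_top_iff.mpr fun y _ => mul_one y ▸ mul_mem_of_forall_ι_mul_mem p hι y h1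

theorem contractLeft_ιMulti_eq_zero (φ : Module.Dual R M) {n : ℕ} (v : Fin n → M)
    (hφ : ∀ i, φ (v i) = 0) : contractLeft φ (ιMulti R n v) = 0 := by
  induction n with
  | zero => simp
  | succ n ih =>
    rw [ιMulti_succ_apply, contractLeft_ι_mul, hφ, ih (Matrix.vecTail v) fun i => hφ i.succ,
      zero_smul, mul_zero, sub_zero]

theorem one_mem_of_ιMulti_mem (p : Submodule R (ExteriorAlgebra R M))
    (hcon : ∀ (φ : Module.Dual R M) (x : ExteriorAlgebra R M), x ∈ p → contractLeft φ x ∈ p)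
    {n : ℕ} (v : Fin n → M) (φ : Fin n → Module.Dual R M)
    (hvφ : ∀ i j, φ i (v j) = if i = j then 1 else 0) (hv : ιMulti R n v ∈ p) :
    (1 : ExteriorAlgebra R M) ∈ p := by
  induction n with
  | zero => simpa using hv
  | succ n ih =>
    refine ih (Matrix.vecTail v) (fun i => φ i.succ) (fun i j => by simp [Matrix.vecTail, hvφ]) ?_
    have hφ₀ : contractLeft (φ 0) (ιMulti R (n + 1) v) = ιMulti R n (Matrix.vecTail v) := by
      rw [ιMulti_succ_apply, contractLeft_ι_mul, contractLeft_ιMulti_eq_zero _ _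
        fun i => by simp [Matrix.vecTail, hvφ, (Fin.succ_ne_zero i).symm], hvφ, if_pos rfl,
        one_smul, mul_zero, sub_zero]
    exact hφ₀ ▸ hcon _ _ hv

theorem basis_mul_basis_eq_zero {I : Type*} [LinearOrder I] (b : Module.Basis I R M)
    {s t : Finset I} (h : ¬Disjoint s t) :
    b.ExteriorAlgebra s * b.ExteriorAlgebra t = 0 :=
  basis_mul_of_not_disjoint b (Set.powersetCard.ofCard (s := s) rfl)
    (Set.powersetCard.ofCard (s := t) rfl) h

theorem exists_basis_mul_basis_eq_units_smul {I : Type*} [LinearOrder I]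
    (b : Module.Basis I R M) {s t : Finset I} (h : Disjoint s t) :
    ∃ ε : ℤˣ, b.ExteriorAlgebra s * b.ExteriorAlgebra t = ε • b.ExteriorAlgebra (s ∪ t) :=
  ⟨_, (basis_mul_of_disjoint b (Set.powersetCard.ofCard (s := s) rfl)
    (Set.powersetCard.ofCard (s := t) rfl) h).trans
      (congrArg (fun u => _ • b.ExteriorAlgebra u) (Finset.disjUnion_eq_union s t h))⟩

theorem one_mem_of_basis_mem {I : Type*} [LinearOrder I] (b : Module.Basis I R M)
    (p : Submodule R (ExteriorAlgebra R M))
    (hcon : ∀ (φ : Module.Dual R M) (x : ExteriorAlgebra R M), x ∈ p → contractLeft φ x ∈ p)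
    (s : Finset I) (hs : b.ExteriorAlgebra s ∈ p) : (1 : ExteriorAlgebra R M) ∈ p := by
  rw [basis_apply] at hs
  set e := Set.powersetCard.ofFinEmbEquiv.symm (Set.powersetCard.prodEquiv.symm s).2
  refine one_mem_of_ιMulti_mem p hcon (b ∘ e) (fun i => b.coord (e i)) (fun i j => ?_) hs
  simp only [Module.Basis.coord_apply, Function.comp_apply, b.repr_self, Finsupp.single_apply,
    e.injective.eq_iff, eq_comm]

end CommRing

theorem basis_univ_mem_of_ne_bot {k L I : Type*} [Field k] [AddCommGroup L] [Module k L]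
    [LinearOrder I] [Fintype I] (b : Module.Basis I k L) (p : Submodule k (ExteriorAlgebra k L))
    (hmul : ∀ (y x : ExteriorAlgebra k L), x ∈ p → y * x ∈ p) (hp : p ≠ ⊥) :
    b.ExteriorAlgebra Finset.univ ∈ p := by
  obtain ⟨x, hxp, hx0⟩ := p.exists_mem_ne_zero_of_ne_bot hp
  set B := b.ExteriorAlgebra
  set c := B.repr x
  obtain ⟨s₀, hs₀, hmin⟩ := Finset.exists_min_image c.support Finset.card
    (Finsupp.support_nonempty_iff.mpr (by simpa [c] using hx0))
  obtain ⟨ε, hε⟩ := exists_basis_mul_basis_eq_units_smul b (disjoint_compl_left (a := s₀))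
  have hisolate : B s₀ᶜ * x = B s₀ᶜ * (c s₀ • B s₀) := by
    conv_lhs => rw [← B.linearCombination_repr x]
    rw [Finsupp.linearCombination_apply, Finsupp.sum, Finset.mul_sum]
    refine Finset.sum_eq_single s₀ (fun s hs hne => ?_) (fun h => absurd hs₀ h)
    have hmeet : ¬Disjoint s₀ᶜ s := fun hdisj =>
      hne (Finset.eq_of_subset_of_card_le (disjoint_compl_left_iff.mp hdisj) (hmin s hs))
    rw [mul_smul_comm, basis_mul_basis_eq_zero b hmeet, smul_zero]
  have hmem := hmul (B s₀ᶜ) x hxp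
  rw [hisolate, mul_smul_comm, hε, Finset.union_comm, Finset.union_compl] at hmem
  exact (p.smul_mem_iff' ε).mp ((p.smul_mem_iff (Finsupp.mem_support_iff.mp hs₀)).mp hmem)

end ExteriorAlgebra

theorem stmt9_general {k L : Type*} [Field k] [AddCommGroup L] [Module k L] [FiniteDimensional k L]
    (Q : QuadraticForm k (L × Module.Dual k L))
    (ρ : CliffordAlgebra Q →ₐ[k] Module.End k (ExteriorAlgebra k L))
    (hρ₁ : ∀ l : L, ρ (CliffordAlgebra.ι Q (l, 0)) = extMul l)
    (hρ₂ : ∀ φ : Module.Dual k L, ρ (CliffordAlgebra.ι Q (0, φ)) = extContract φ) :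
    (∀ φ : Module.Dual k L, ρ (CliffordAlgebra.ι Q (0, φ)) (1 : ExteriorAlgebra k L) = 0) ∧
      Function.Surjective (fun a : CliffordAlgebra Q => ρ a (1 : ExteriorAlgebra k L)) ∧
      ∀ p : Submodule k (ExteriorAlgebra k L),
        (∀ (a : CliffordAlgebra Q) (x : ExteriorAlgebra k L), x ∈ p → ρ a x ∈ p) →
        p = ⊥ ∨ p = ⊤ := by
  have hι (p : Submodule k (ExteriorAlgebra k L)) (hp : ∀ a, ∀ x ∈ p, ρ a x ∈ p) (v : L) :
      ∀ x ∈ p, ExteriorAlgebra.ι k v * x ∈ p := fun x hx =>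
    show extMul v x ∈ p from hρ₁ v ▸ hp _ x hx
  have hcon (p : Submodule k (ExteriorAlgebra k L)) (hp : ∀ a, ∀ x ∈ p, ρ a x ∈ p)
      (φ : Module.Dual k L) : ∀ x ∈ p, CliffordAlgebra.contractLeft φ x ∈ p :=
    fun x hx => show extContract φ x ∈ p from hρ₂ φ ▸ hp _ x hx
  refine ⟨fun φ => by rw [hρ₂]; exact CliffordAlgebra.contractLeft_one _ φ, ?_, fun p hp => ?_⟩
  · let orbit := LinearMap.range (LinearMap.applyₗ (1 : ExteriorAlgebra k L) ∘ₗ ρ.toLinearMap)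
    have horbit : ∀ a, ∀ x ∈ orbit, ρ a x ∈ orbit := by
      rintro a _ ⟨c, rfl⟩
      exact ⟨a * c, by simp⟩
    exact LinearMap.range_eq_top.mp
      (ExteriorAlgebra.eq_top_of_one_mem orbit (hι orbit horbit) ⟨1, by simp⟩)
  · refine or_iff_not_imp_left.mpr fun hbot => ExteriorAlgebra.eq_top_of_one_mem p (hι p hp) ?_
    let b := Module.finBasis k L
    exact ExteriorAlgebra.one_mem_of_basis_mem b p (hcon p hp) Finset.univ <|
      ExteriorAlgebra.basis_univ_mem_of_ne_bot b p
        (fun y _ hx => ExteriorAlgebra.mul_mem_of_forall_ι_mul_mem p (hι p hp) y hx) hbot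

/-- In the Fock representation of `Cl(M, Q)` on `Λ L` (with `M = L × L^*`,
`Q(l, φ) = φ(l)`, `L` acting by exterior multiplication and `L^*` by contraction):
(1) `1 ∈ Λ L` is annihilated by every element of `L^*`;
(2) `a ↦ a · 1` is surjective from `Cl(M, Q)` to `Λ L`;
(3) `Λ L` is a simple `Cl(M, Q)`-module. -/
theorem stmt9 {k L : Type*} [Field k] [AddCommGroup L] [Module k L] [FiniteDimensional k L]
    (Q : QuadraticForm k (L × Module.Dual k L)) (hQ : ∀ p, Q p = p.2 p.1)
    (ρ : CliffordAlgebra Q →ₐ[k] Module.End k (ExteriorAlgebra k L))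
    (hρ₁ : ∀ l : L, ρ (CliffordAlgebra.ι Q (l, 0)) = extMul l)
    (hρ₂ : ∀ φ : Module.Dual k L, ρ (CliffordAlgebra.ι Q (0, φ)) = extContract φ) :
    (∀ φ : Module.Dual k L, ρ (CliffordAlgebra.ι Q (0, φ)) (1 : ExteriorAlgebra k L) = 0) ∧
      Function.Surjective (fun a : CliffordAlgebra Q => ρ a (1 : ExteriorAlgebra k L)) ∧
      ∀ p : Submodule k (ExteriorAlgebra k L),
        (∀ (a : CliffordAlgebra Q) (x : ExteriorAlgebra k L), x ∈ p → ρ a x ∈ p) →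
        p = ⊥ ∨ p = ⊤ :=
  stmt9_general Q ρ hρ₁ hρ₂
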